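/- The dimension of the center of the twisted group algebra ℂ^α G equals the number of α-regular conjugacy classes of G. In particular, if α is cohomologically trivial then all elements of G are α-regular and dim Z(ℂ^α G) equals the number of conjugacy classes of G. -/

import Mathlib

/-!
Conjugation by the units `u_t` permutes the lines `ℂ u_x` up to scalars:
`u_t u_x u_t⁻¹ = c(t, x) u_{t x t⁻¹}`. A central element is fixed by all these conjugations, so
its coefficients on a conjugacy class vanish together, and its coefficient at `x` vanishes
unless `c(t, x) = 1` for all `t ∈ C_G(x)`, i.e. unless `x` is `α`-regular. Conversely, for
`α`-regular `x` the class sum `∑ₜ u_t u_x u_t⁻¹` is central with `x`-coefficient `|C_G(x)|` and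
no support outside the class of `x`. Hence the coefficients at representatives of the
`α`-regular classes identify the center with functions on those classes. A coboundary is
symmetric on commuting pairs, which makes every element `α`-regular.
-/

/-- The 2-cocycle condition for `α : G × G → ℂˣ` (trivial action). -/
def IsCocycle {G : Type*} [Group G] {R : Type*} [CommRing R] (α : G → G → Rˣ) : Prop :=
  ∀ g h k : G, α g h * α (g * h) k = α h k * α g (h * k)

/-- `A` is a twisted group ring `R^α G`: it has an `R`-basis `{u_g}_{g ∈ G}` with
`u_g u_h = α(g,h) u_{gh}`. -/
structure TwistedGroupAlgebraOn (R : Type*) [CommRing R] (G : Type*) [Group G]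
    (A : Type*) [Ring A] [Algebra R A] (α : G → G → Rˣ) where
  b : Module.Basis G R A
  b_mul : ∀ g h : G, b g * b h = (α g h : R) • b (g * h)

/-- `g` is `α`-regular: in `ℂ^α G`, `u_g` commutes with `u_h` for every `h`
centralizing `g`. -/
def IsAlphaRegular {G : Type*} [Group G] {A : Type*} [Ring A] [Algebra ℂ A]
    {α : G → G → ℂˣ} (S : TwistedGroupAlgebraOn ℂ G A α) (g : G) : Prop :=
  ∀ h : G, h * g = g * h → S.b g * S.b h = S.b h * S.b g

namespace IsCocycle

variable {G : Type*} [Group G] {R : Type*} [CommRing R] {α : G → G → Rˣ}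

lemma apply_one_left (hα : IsCocycle α) (g : G) : α 1 g = α 1 1 := by
  simpa using (hα 1 1 g).symm

lemma apply_one_right (hα : IsCocycle α) (g : G) : α g 1 = α 1 1 := by
  simpa using hα g 1 1

lemma apply_inv_self (hα : IsCocycle α) (g : G) : α g g⁻¹ = α g⁻¹ g := by
  simpa [hα.apply_one_left, hα.apply_one_right] using hα g g⁻¹ g

end IsCocycle

namespace TwistedGroupAlgebraOn

section CommRing

variable {R : Type*} [CommRing R] {G : Type*} [Group G] {A : Type*} [Ring A] [Algebra R A]
  {α : G → G → Rˣ} (S : TwistedGroupAlgebraOn R G A α)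

lemma smul_b_inj {c d : R} {g : G} : c • S.b g = d • S.b g ↔ c = d :=
  ⟨fun h => by simpa using congr(S.b.repr $h g), fun h => h ▸ rfl⟩

theorem isCocycle (S : TwistedGroupAlgebraOn R G A α) : IsCocycle α := by
  intro g h k
  have h_assoc := mul_assoc (S.b g) (S.b h) (S.b k)
  rw [S.b_mul, smul_mul_assoc, S.b_mul, S.b_mul, mul_smul_comm, S.b_mul, smul_smul, smul_smul,
    mul_assoc, smul_b_inj] at h_assoc
  exact Units.ext (by simpa [mul_comm] using h_assoc)

lemma b_one : S.b 1 = (α 1 1 : R) • 1 := by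
  have h : LinearMap.mulLeft R (S.b 1) = (α 1 1 : R) • LinearMap.id :=
    S.b.ext fun g => by simp [S.b_mul, S.isCocycle.apply_one_left]
  simpa using LinearMap.congr_fun h 1

noncomputable def unit (g : G) : Aˣ where
  val := S.b g
  inv := (α g g⁻¹ * α 1 1)⁻¹ • S.b g⁻¹
  val_inv := by
    rw [mul_smul_comm, S.b_mul, mul_inv_cancel, S.b_one, smul_smul, ← Units.val_mul,
      ← Units.smul_def, inv_smul_smul]
  inv_val := by
    rw [smul_mul_assoc, S.b_mul, inv_mul_cancel, S.b_one, smul_smul, ← Units.val_mul,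
      ← S.isCocycle.apply_inv_self, ← Units.smul_def, inv_smul_smul]

@[simp] lemma val_unit (g : G) : (S.unit g : A) = S.b g := rfl

lemma val_inv_unit (g : G) : ↑(S.unit g)⁻¹ = (α g g⁻¹ * α 1 1)⁻¹ • S.b g⁻¹ := rfl

lemma unit_mul (g h : G) :
    S.unit g * S.unit h = Units.map (algebraMap R A) (α g h) * S.unit (g * h) :=
  Units.ext (by simp [S.b_mul, Algebra.smul_def])

noncomputable def conj (t : G) : A ≃ₐ[R] A :=
  MulSemiringAction.toAlgEquiv R A (ConjAct.toConjAct (S.unit t))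

lemma conj_apply (t : G) (a : A) : S.conj t a = S.b t * a * ↑(S.unit t)⁻¹ := rfl

lemma conj_eq_self_iff (t : G) (a : A) : S.conj t a = a ↔ S.b t * a = a * S.b t := by
  rw [conj_apply, ← val_unit, Units.mul_inv_eq_iff_eq_mul]

lemma conj_mul (g h : G) (a : A) : S.conj (g * h) a = S.conj g (S.conj h a) := by
  have conj_scalar (r : Rˣ) (x : A) :
      ConjAct.toConjAct (Units.map (algebraMap R A : R →* A) r) • x = x := by
    rw [ConjAct.units_smul_def, ConjAct.ofConjAct_toConjAct, Units.mul_inv_eq_iff_eq_mul]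
    exact Algebra.commutes _ _
  change ConjAct.toConjAct (S.unit (g * h)) • a =
    ConjAct.toConjAct (S.unit g) • ConjAct.toConjAct (S.unit h) • a
  rw [← mul_smul, ← map_mul, unit_mul, map_mul, mul_smul, conj_scalar]

noncomputable def conjCoeff (α : G → G → Rˣ) (t x : G) : Rˣ :=
  α t x * α (t * x) t⁻¹ * (α t t⁻¹ * α 1 1)⁻¹

lemma conj_b (t x : G) : S.conj t (S.b x) = (conjCoeff α t x : R) • S.b (t * x * t⁻¹) := by
  rw [conj_apply, val_inv_unit, S.b_mul, smul_mul_assoc, mul_smul_comm, S.b_mul]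
  simp [Units.smul_def, smul_smul, conjCoeff, mul_comm, mul_assoc]

lemma repr_conj_b (t x : G) :
    S.b.repr (S.conj t (S.b x)) = Finsupp.single (t * x * t⁻¹) (conjCoeff α t x : R) := by
  simp [conj_b]

lemma repr_conj_apply_conj (t x : G) (a : A) :
    S.b.repr (S.conj t a) (t * x * t⁻¹) = conjCoeff α t x * S.b.repr a x := by
  have h : (S.b.coord (t * x * t⁻¹)) ∘ₗ (S.conj t).toLinearMap =
      (conjCoeff α t x : R) • S.b.coord x :=
    S.b.ext fun y => by
      by_cases hyx : y = x <;> simp [repr_conj_b, hyx]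
  simpa using LinearMap.congr_fun h a

lemma mem_center_iff_forall_commute_b (z : A) :
    z ∈ Subalgebra.center R A ↔ ∀ t, S.b t * z = z * S.b t := by
  refine ⟨fun hz t => Subalgebra.mem_center_iff.mp hz _, fun hz => ?_⟩
  have h : LinearMap.mulRight R z = LinearMap.mulLeft R z := S.b.ext fun t => by simpa using hz t
  exact Subalgebra.mem_center_iff.mpr fun a => by simpa using LinearMap.congr_fun h a

lemma mem_center_iff_forall_conj_eq (z : A) :
    z ∈ Subalgebra.center R A ↔ ∀ t, S.conj t z = z := by
  simp only [S.mem_center_iff_forall_commute_b, conj_eq_self_iff]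

lemma conjCoeff_eq_one_iff {t x : G} (hxt : t * x = x * t) :
    conjCoeff α t x = 1 ↔ S.b t * S.b x = S.b x * S.b t := by
  have hx : t * x * t⁻¹ = x := by rw [hxt, mul_inv_cancel_right]
  rw [← conj_eq_self_iff, conj_b, hx, ← Units.val_eq_one, ← S.smul_b_inj (g := x), one_smul]

lemma repr_eq_zero_of_isConj {z : A} (hz : z ∈ Subalgebra.center R A) {x y : G}
    (hxy : IsConj x y) (hx : S.b.repr z x = 0) : S.b.repr z y = 0 := by
  obtain ⟨t, rfl⟩ := isConj_iff.mp hxy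
  rw [← (S.mem_center_iff_forall_conj_eq z).mp hz t, repr_conj_apply_conj, hx, mul_zero]

section Finite

variable [Fintype G]

noncomputable def classSum (x : G) : A := ∑ t, S.conj t (S.b x)

lemma conj_classSum (h x : G) : S.conj h (S.classSum x) = S.classSum x := by
  simp only [classSum, map_sum, ← conj_mul]
  exact Fintype.sum_equiv (Equiv.mulLeft h) _ _ fun t => rfl

lemma classSum_mem_center (x : G) : S.classSum x ∈ Subalgebra.center R A :=
  (S.mem_center_iff_forall_conj_eq _).mpr fun h => S.conj_classSum h x

lemma repr_classSum (x y : G) :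
    S.b.repr (S.classSum x) y = ∑ t, Finsupp.single (t * x * t⁻¹) (conjCoeff α t x : R) y := by
  simp [classSum, repr_conj_b]

lemma repr_classSum_eq_zero_of_not_isConj {x y : G} (hxy : ¬IsConj x y) :
    S.b.repr (S.classSum x) y = 0 := by
  rw [repr_classSum]
  exact Finset.sum_eq_zero fun t _ =>
    Finsupp.single_eq_of_ne fun h => hxy (isConj_iff.mpr ⟨t, h.symm⟩)

end Finite

end CommRing

section Complex

variable {G : Type*} [Group G] {A : Type*} [Ring A] [Algebra ℂ A] {α : G → G → ℂˣ}
  (S : TwistedGroupAlgebraOn ℂ G A α)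

lemma isAlphaRegular_iff_conjCoeff_eq_one (x : G) :
    IsAlphaRegular S x ↔ ∀ t, t * x = x * t → conjCoeff α t x = 1 :=
  forall₂_congr fun _ hxt => by rw [S.conjCoeff_eq_one_iff hxt, eq_comm]

lemma isAlphaRegular_of_coboundary (δ : G → ℂˣ)
    (hδ : ∀ g h : G, α g h = δ g * δ h * (δ (g * h))⁻¹) (x : G) : IsAlphaRegular S x := by
  intro t hxt
  rw [S.b_mul, S.b_mul, hδ, hδ, hxt, mul_comm (δ x)]

lemma repr_eq_zero_of_not_isAlphaRegular {z : A} (hz : z ∈ Subalgebra.center ℂ A) {x : G}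
    (hx : ¬IsAlphaRegular S x) : S.b.repr z x = 0 := by
  obtain ⟨t, hxt, hne⟩ : ∃ t, t * x = x * t ∧ conjCoeff α t x ≠ 1 := by
    simpa [S.isAlphaRegular_iff_conjCoeff_eq_one] using hx
  -- conjugation by `u_t` fixes `z` but scales its `x`-coefficient by `conjCoeff α t x ≠ 1`
  have h_fix := S.repr_conj_apply_conj t x z
  rw [(S.mem_center_iff_forall_conj_eq z).mp hz t, hxt, mul_inv_cancel_right] at h_fix
  exact (mul_left_eq_self₀.mp h_fix.symm).resolve_left (Units.val_eq_one.not.mpr hne)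

lemma repr_classSum_self_ne_zero [Fintype G] {x : G} (hx : IsAlphaRegular S x) :
    S.b.repr (S.classSum x) x ≠ 0 := by
  classical
  have h_term (t : G) : Finsupp.single (t * x * t⁻¹) (conjCoeff α t x : ℂ) x =
      if t * x * t⁻¹ = x then 1 else 0 := by
    split_ifs with ht
    · rw [ht, Finsupp.single_eq_same, (S.isAlphaRegular_iff_conjCoeff_eq_one x).mp hx t
        (mul_inv_eq_iff_eq_mul.mp ht), Units.val_one]
    · exact Finsupp.single_eq_of_ne (Ne.symm ht)
  rw [repr_classSum, Finset.sum_congr rfl fun t _ => h_term t, Finset.sum_boole]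
  exact Nat.cast_ne_zero.mpr (Finset.card_ne_zero.mpr ⟨1, by simp⟩)

abbrev RegularClass : Type _ :=
  {c : ConjClasses G // ∃ g : G, ConjClasses.mk g = c ∧ IsAlphaRegular S g}

variable {S}

noncomputable def RegularClass.rep (c : S.RegularClass) : G := c.2.choose

lemma RegularClass.mk_rep (c : S.RegularClass) : ConjClasses.mk c.rep = c.1 :=
  c.2.choose_spec.1

lemma RegularClass.isAlphaRegular_rep (c : S.RegularClass) : IsAlphaRegular S c.rep :=
  c.2.choose_spec.2

lemma RegularClass.isConj_rep_iff (c c' : S.RegularClass) : IsConj c.rep c'.rep ↔ c = c' := by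
  rw [← ConjClasses.mk_eq_mk_iff_isConj, c.mk_rep, c'.mk_rep, Subtype.ext_iff]

variable (S)

noncomputable def centerCoeffs : Subalgebra.center ℂ A →ₗ[ℂ] (S.RegularClass → ℂ) :=
  LinearMap.pi fun c => S.b.coord c.rep ∘ₗ (Subalgebra.center ℂ A).val.toLinearMap

lemma centerCoeffs_apply (z : Subalgebra.center ℂ A) (c : S.RegularClass) :
    S.centerCoeffs z c = S.b.repr z c.rep := rfl

lemma centerCoeffs_injective : Function.Injective S.centerCoeffs := by
  refine (injective_iff_map_eq_zero _).mpr fun z hz => Subtype.ext (S.b.ext_elem fun g => ?_)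
  rw [ZeroMemClass.coe_zero, map_zero, Finsupp.zero_apply]
  by_cases hg : IsAlphaRegular S g
  · let c : S.RegularClass := ⟨ConjClasses.mk g, g, rfl, hg⟩
    have hc : IsConj c.rep g := ConjClasses.mk_eq_mk_iff_isConj.mp c.mk_rep
    exact S.repr_eq_zero_of_isConj z.2 hc (congr_fun hz c)
  · exact S.repr_eq_zero_of_not_isAlphaRegular z.2 hg

lemma centerCoeffs_surjective [Fintype G] : Function.Surjective S.centerCoeffs := by
  have := Fintype.ofFinite S.RegularClass
  intro f
  let n (c : S.RegularClass) : ℂ := S.b.repr (S.classSum c.rep) c.rep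
  refine ⟨∑ c, (f c / n c) • ⟨S.classSum c.rep, S.classSum_mem_center _⟩, funext fun c' => ?_⟩
  rw [map_sum, Finset.sum_apply]
  simp only [map_smul, Pi.smul_apply, smul_eq_mul]
  simp only [centerCoeffs_apply]
  rw [Finset.sum_eq_single c',
    div_mul_cancel₀ _ (S.repr_classSum_self_ne_zero c'.isAlphaRegular_rep)]
  · intro c _ hc
    rw [S.repr_classSum_eq_zero_of_not_isConj (mt (c.isConj_rep_iff c').mp hc), mul_zero]
  · simp

lemma finrank_center_eq_card_regularClass [Fintype G] :
    Module.finrank ℂ (Subalgebra.center ℂ A) = Nat.card S.RegularClass := by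
  have := Fintype.ofFinite S.RegularClass
  rw [(LinearEquiv.ofBijective _
      ⟨S.centerCoeffs_injective, S.centerCoeffs_surjective⟩).finrank_eq,
    Module.finrank_fintype_fun_eq_card, Nat.card_eq_fintype_card]

end Complex

end TwistedGroupAlgebraOn

theorem center_dim_eq_regular_classes_general {G : Type*} [Group G] [Fintype G]
    {A : Type*} [Ring A] [Algebra ℂ A]
    (α : G → G → ℂˣ) (S : TwistedGroupAlgebraOn ℂ G A α) :
    Module.finrank ℂ (Subalgebra.center ℂ A) =
      Nat.card {c : ConjClasses G // ∃ g : G, ConjClasses.mk g = c ∧ IsAlphaRegular S g} ∧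
    (∀ δ : G → ℂˣ, (∀ g h : G, α g h = δ g * δ h * (δ (g * h))⁻¹) →
      (∀ g : G, IsAlphaRegular S g) ∧
      Module.finrank ℂ (Subalgebra.center ℂ A) = Nat.card (ConjClasses G)) := by
  refine ⟨S.finrank_center_eq_card_regularClass, fun δ hδ => ?_⟩
  have h_reg := S.isAlphaRegular_of_coboundary δ hδ
  refine ⟨h_reg, S.finrank_center_eq_card_regularClass.trans
    (Nat.card_congr (Equiv.subtypeUnivEquiv fun c => ?_))⟩
  obtain ⟨g, rfl⟩ := ConjClasses.mk_surjective c
  exact ⟨g, rfl, h_reg g⟩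

/-- The dimension of the center of the twisted group algebra `ℂ^α G`
equals the number of `α`-regular conjugacy classes of `G`. In particular, if `α` is
cohomologically trivial then every element of `G` is `α`-regular and the dimension of
the center equals the number of conjugacy classes of `G`. -/
theorem center_dim_eq_regular_classes {G : Type*} [Group G] [Fintype G]
    {A : Type*} [Ring A] [Algebra ℂ A]
    (α : G → G → ℂˣ) (hα : IsCocycle α) (S : TwistedGroupAlgebraOn ℂ G A α) :
    Module.finrank ℂ (Subalgebra.center ℂ A) =
      Nat.card {c : ConjClasses G // ∃ g : G, ConjClasses.mk g = c ∧ IsAlphaRegular S g} ∧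
    (∀ δ : G → ℂˣ, (∀ g h : G, α g h = δ g * δ h * (δ (g * h))⁻¹) →
      (∀ g : G, IsAlphaRegular S g) ∧
      Module.finrank ℂ (Subalgebra.center ℂ A) = Nat.card (ConjClasses G)) :=
  center_dim_eq_regular_classes_general α S
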